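/- For a partition λ with at most N parts, the specialization s_λ(t) at t_m = a/m for all m ≥ 1 (i.e. all power sums p_m = a) equals ∏_{(i,j)∈λ} (a + j − i) / H_λ, where H_λ = ∏_{(i,j)∈λ} h(i,j) is the product of hook lengths. -/

import Mathlib

open Finset

noncomputable def pochC (a : ℂ) (n : ℕ) : ℂ := ∏ k ∈ Finset.range n, (a + k)

noncomputable def qPochC (x q : ℂ) (n : ℕ) : ℂ := ∏ k ∈ Finset.range n, (1 - x * q ^ k)

noncomputable def elemSchur (t : ℕ → ℂ) : ℕ → ℂ
  | 0 => 1
  | n + 1 =>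
      ((n : ℂ) + 1)⁻¹ *
        ∑ k ∈ Finset.range (n + 1), ((k : ℂ) + 1) * t (k + 1) * elemSchur t (n - k)
  termination_by n => n
  decreasing_by simp_wf <;> omega

noncomputable def pInt (t : ℕ → ℂ) (n : ℤ) : ℂ := if 0 ≤ n then elemSchur t n.toNat else 0

noncomputable def schurP (t : ℕ → ℂ) (l : List ℕ) : ℂ :=
  Matrix.det (Matrix.of fun i j : Fin l.length =>
    pInt t ((l.get i : ℤ) - ((i : ℕ) : ℤ) + ((j : ℕ) : ℤ)))

def conjCount (l : List ℕ) (j : ℕ) : ℕ := l.countP (fun a => decide (j < a))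

def conjPart (l : List ℕ) : List ℕ := (List.range l.headI).map (conjCount l)

def hookLen (l : List ℕ) (i j : ℕ) : ℕ := l.getD i 0 + conjCount l j - i - j - 1

noncomputable def hookProdC (l : List ℕ) : ℂ :=
  ∏ i ∈ Finset.range l.length, ∏ j ∈ Finset.range (l.getD i 0), ((hookLen l i j : ℕ) : ℂ)

noncomputable def hookProdQ (q : ℂ) (l : List ℕ) : ℂ :=
  ∏ i ∈ Finset.range l.length, ∏ j ∈ Finset.range (l.getD i 0), (1 - q ^ hookLen l i j)

def nStat (l : List ℕ) : ℕ := ∑ i ∈ Finset.range l.length, i * l.getD i 0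

noncomputable def rProd (r : ℤ → ℂ) (M : ℤ) (l : List ℕ) : ℂ :=
  ∏ i ∈ Finset.range l.length, ∏ j ∈ Finset.range (l.getD i 0), r ((j : ℤ) - (i : ℤ) + M)

noncomputable def pochPart (c : ℂ) (l : List ℕ) : ℂ :=
  ∏ i ∈ Finset.range l.length, pochC (c - (i : ℕ)) (l.getD i 0)

noncomputable def miwaP {N : ℕ} (x : Fin N → ℂ) (m : ℕ) : ℂ := ((m : ℂ))⁻¹ * ∑ i, x i ^ m

noncomputable def qPochInf (x q : ℂ) : ℂ := ∏' k : ℕ, (1 - x * q ^ k)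

noncomputable def GammaQ (q a : ℂ) : ℂ := (1 - q) ^ (1 - a) * qPochInf q q / qPochInf (q ^ a) q

def partList {n : ℕ} (p : n.Partition) : List ℕ := (p.parts.sort (· ≤ ·)).reverse

/-!
With `t_m = a / m` the elementary Schur polynomials become `h_n = (a)_n / n!`, and they satisfy
`h_n(a) = h_n(a - 1) + h_{n-1}(a)`. Right multiplication by a unitriangular matrix of signed
binomial coefficients therefore turns the Jacobi–Trudi matrix `(h_{λ_i - i + j}(a))` into
`(h_{λ_i - i + j}(a - j))`. With the shifted parts `m_i = λ_i + L - 1 - i` and `b = a + 1 - L`,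
the `(i, j)` entry times `(b)_{L-1-j}` is `(b)_{m_i} / m_i!` times the falling factorial
`m_i (m_i - 1) ⋯ (m_i - L + 2 + j)`, so up to row and column factors the determinant is a
Vandermonde determinant in the `m_i`. In row `i` the hook lengths and the gaps `m_i - m_k`
(`k > i`) are exactly `1, …, m_i`, hence `H_λ ∏_{i<k} (m_i - m_k) = ∏ m_i!`. This gives the
formula whenever the column factors `(b)_k` do not vanish, in particular for `a ∉ ℕ`; both sides
are continuous in `a`, and the complement of `ℕ` is dense in `ℂ`.
-/

open scoped Nat
open Matrix

lemma pochC_add (a : ℂ) (p q : ℕ) : pochC a (p + q) = pochC a p * pochC (a + p) q := by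
  rw [pochC, pochC, pochC, prod_range_add]
  congr 1
  exact prod_congr rfl fun k _ => by push_cast; ring

lemma pochC_succ_right (a : ℂ) (n : ℕ) : pochC a (n + 1) = pochC a n * (a + n) := by
  simp [pochC, prod_range_succ]

lemma pochC_succ_left (a : ℂ) (n : ℕ) : pochC a (n + 1) = a * pochC (a + 1) n := by
  rw [add_comm n, pochC_add]
  simp [pochC]

lemma sum_range_pochC_div_factorial (a : ℂ) (n : ℕ) :
    ∑ m ∈ range (n + 1), pochC a m / m ! = pochC (a + 1) n / n ! := by
  induction n with
  | zero => simp [pochC]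
  | succ n ih =>
    rw [sum_range_succ, ih, pochC_succ_right (a + 1), pochC_succ_left, Nat.factorial_succ]
    push_cast
    field_simp
    ring

noncomputable abbrev contentH (a : ℂ) : ℤ → ℂ := pInt fun m => a / (m : ℂ)

lemma elemSchur_div_natCast (a : ℂ) (n : ℕ) :
    elemSchur (fun m => a / (m : ℂ)) n = pochC a n / n ! := by
  induction n using Nat.strong_induction_on with
  | _ n ih =>
  rcases n with _ | n
  · simp [elemSchur, pochC]
  rw [elemSchur]
  -- `(k + 1) t_{k+1} = a`, so Newton's recursion reads `(n + 1) h_{n+1} = a (h_0 + ⋯ + h_n)`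
  have hterm : ∀ k ∈ range (n + 1), ((k : ℂ) + 1) * (a / ((k + 1 : ℕ) : ℂ)) *
      elemSchur (fun m => a / (m : ℂ)) (n - k) = a * (pochC a (n - k) / (n - k) !) := by
    intro k _
    rw [ih _ (by omega)]
    push_cast
    field_simp
  have hreflect := sum_range_reflect (fun m => pochC a m / m !) (n + 1)
  rw [Nat.add_sub_cancel] at hreflect
  rw [sum_congr rfl hterm, ← mul_sum, hreflect, sum_range_pochC_div_factorial, pochC_succ_left,
    Nat.factorial_succ]
  push_cast
  field_simp

lemma contentH_natCast (a : ℂ) (n : ℕ) : contentH a n = pochC a n / n ! := by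
  simp [pInt, elemSchur_div_natCast]

lemma contentH_of_neg (a : ℂ) {n : ℤ} (hn : n < 0) : contentH a n = 0 := by
  simp [pInt, not_le.2 hn]

lemma contentH_eq_sub_one_add (a : ℂ) (n : ℤ) :
    contentH a n = contentH (a - 1) n + contentH a (n - 1) := by
  obtain hn | rfl | hn := lt_trichotomy n 0
  · simp [contentH_of_neg, hn, show n - 1 < 0 by omega]
  · have h0 (b : ℂ) : contentH b 0 = 1 := by simpa [pochC] using contentH_natCast b 0
    simp [h0, contentH_of_neg]
  · obtain ⟨k, rfl⟩ : ∃ k : ℕ, n = k + 1 := ⟨(n - 1).toNat, by omega⟩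
    rw [add_sub_cancel_right, show (k : ℤ) + 1 = (k + 1 : ℕ) by push_cast; rfl,
      contentH_natCast, contentH_natCast, contentH_natCast, pochC_succ_right, pochC_succ_left,
      sub_add_cancel, Nat.factorial_succ]
    push_cast
    field_simp
    ring

lemma sum_range_choose_mul_contentH (a : ℂ) (c : ℕ) (n : ℤ) :
    ∑ k ∈ range (c + 1), (c.choose k : ℂ) * ((-1) ^ (c - k) * contentH a (n + k)) =
      contentH (a - c) (n + c) := by
  induction c generalizing n with
  | zero => simp
  | succ c ih =>
    rw [sum_choose_succ_mul (fun i j => (-1) ^ j * contentH a (n + i)) c]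
    have hsign : ∀ i ∈ range (c + 1),
        (c.choose i : ℂ) * ((-1) ^ (c + 1 - i) * contentH a (n + i))
        = -((c.choose i : ℂ) * ((-1) ^ (c - i) * contentH a (n + i))) := by
      intro i hi
      rw [show c + 1 - i = c - i + 1 by have := mem_range.1 hi; omega, pow_succ]
      ring
    have hshift : ∀ i ∈ range (c + 1),
        (c.choose i : ℂ) * ((-1) ^ (c - i) * contentH a (n + (i + 1 : ℕ)))
          = (c.choose i : ℂ) * ((-1) ^ (c - i) * contentH a (n + 1 + i)) := by
      intro i _
      rw [Nat.cast_succ, add_comm (i : ℤ), ← add_assoc]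
    have hn : n + (c + 1 : ℕ) = n + 1 + c := by push_cast; ring
    have hn' : n + 1 + c - 1 = n + c := by ring
    have ha : a - (c + 1 : ℕ) = a - c - 1 := by push_cast; ring
    rw [sum_congr rfl hsign, sum_neg_distrib, ih, sum_congr rfl hshift, ih, hn, ha,
      contentH_eq_sub_one_add (a - c) (n + 1 + c), hn']
    ring

lemma det_contentH_eq_det_contentH_sub {n : ℕ} (a : ℂ) (μ : Fin n → ℤ) :
    (of fun i j : Fin n => contentH a (μ i + j)).det =
      (of fun i j : Fin n => contentH (a - j) (μ i + j)).det := by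
  set T : Matrix (Fin n) (Fin n) ℂ :=
    of fun k j => ((j : ℕ).choose k : ℂ) * (-1) ^ ((j : ℕ) - k)
  have hT : T.det = 1 := by
    rw [det_of_isUpperTriangular]
    · simp [T]
    · intro k j hjk
      simp [T, Nat.choose_eq_zero_of_lt (show (j : ℕ) < k from hjk)]
  have hmul : (of fun i j : Fin n => contentH a (μ i + j)) * T =
      of fun i j : Fin n => contentH (a - j) (μ i + j) := by
    ext i j
    rw [mul_apply, of_apply, ← sum_range_choose_mul_contentH a j (μ i),
      sum_subset (range_subset_range.2 j.isLt), ← Fin.sum_univ_eq_sum_range]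
    · exact sum_congr rfl fun k _ => by simp [T]; ring
    · intro k hk hkj
      rw [mem_range] at hk hkj
      simp [Nat.choose_eq_zero_of_lt (show (j : ℕ) < k by omega)]
  rw [← hmul, det_mul, hT, mul_one]

lemma pochC_mul_contentH_sub (b : ℂ) (m k : ℕ) :
    pochC b k * contentH (b + k) ((m : ℤ) - k) = pochC b m / m ! * m.descFactorial k := by
  rcases le_or_gt k m with hkm | hmk
  · obtain ⟨d, rfl⟩ := Nat.exists_eq_add_of_le hkm
    have hfact := Nat.factorial_mul_descFactorial hkm
    rw [Nat.add_sub_cancel_left] at hfact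
    rw [show ((k + d : ℕ) : ℤ) - k = (d : ℕ) by push_cast; ring, contentH_natCast, pochC_add,
      ← hfact]
    push_cast
    have : (d ! : ℂ) ≠ 0 := Nat.cast_ne_zero.2 d.factorial_ne_zero
    have : ((k + d).descFactorial k : ℂ) ≠ 0 := by
      exact_mod_cast (Nat.descFactorial_pos.2 hkm).ne'
    field_simp
  · rw [contentH_of_neg _ (by omega), (Nat.descFactorial_eq_zero_iff_lt).2 hmk]
    simp

theorem Fin.prod_prod_Ioi_rev {M : Type*} [CommMonoid M] {n : ℕ} (f : Fin n → Fin n → M) :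
    ∏ i : Fin n, ∏ j ∈ Ioi i, f j.rev i.rev = ∏ i : Fin n, ∏ j ∈ Ioi i, f i j := by
  rw [← Equiv.prod_comp Fin.revPerm]
  have hinner (i : Fin n) : ∏ j ∈ Ioi i.rev, f j.rev i = ∏ j ∈ Iio i, f j i := by
    rw [← Fin.rev_rev i, ← Fin.finsetImage_rev_Ioi,
      prod_image fun _ _ _ _ h => Fin.rev_injective h]
    simp only [Fin.rev_rev]
  simp only [Fin.revPerm_apply, Fin.rev_rev, hinner]
  exact prod_comm' fun i j => by simp

theorem det_descPochhammer_eval_rev {R : Type*} [CommRing R] [IsDomain R] {n : ℕ}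
    (v : Fin n → R) :
    (of fun i j : Fin n => (descPochhammer R j.rev).eval (v i)).det =
      ∏ i, ∏ j ∈ Ioi i, (v i - v j) := by
  rw [← det_submatrix_equiv_self Fin.revPerm]
  have hrev : (of fun i j : Fin n => (descPochhammer R j.rev).eval (v i)).submatrix
      Fin.revPerm Fin.revPerm = of fun i j : Fin n => (descPochhammer R j).eval (v i.rev) := by
    ext i j
    simp only [submatrix_apply, of_apply, Fin.revPerm_apply, Fin.rev_rev]
  rw [hrev, ← det_eval_matrixOfPolynomials_eq_det_vandermonde (fun i => v i.rev)
    (fun j => descPochhammer R j) (fun j => descPochhammer_natDegree R j)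
    (fun j => monic_descPochhammer R j), det_vandermonde,
    ← Fin.prod_prod_Ioi_rev]
  simp only [Fin.rev_rev]

theorem prod_pochC_mul_det_contentH {n : ℕ} (b : ℂ) (m : Fin n → ℕ) :
    (∏ j : Fin n, pochC b j.rev) *
        (of fun i j : Fin n => contentH (b + (j.rev : ℕ)) ((m i : ℤ) - (j.rev : ℕ))).det =
      (∏ i, pochC b (m i) / (m i)!) * ∏ i : Fin n, ∏ j ∈ Ioi i, ((m i : ℂ) - m j) := by
  rw [← det_mul_row, ← det_descPochhammer_eval_rev, ← det_mul_column]
  congr 1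
  ext i j
  simp only [of_apply, descPochhammer_eval_eq_descFactorial, pochC_mul_contentH_sub]

lemma conjCount_eq_card (l : List ℕ) (j : ℕ) :
    conjCount l j = #{r ∈ range l.length | j < l.getD r 0} := by
  induction l with
  | nil => simp [conjCount]
  | cons x t ih =>
    rw [conjCount, List.countP_cons, ← conjCount, ih, List.length_cons, card_filter,
      card_filter, sum_range_succ']
    simp [add_comm]

lemma conjCount_le_length (l : List ℕ) (j : ℕ) : conjCount l j ≤ l.length := by
  rw [conjCount_eq_card]
  exact (card_filter_le _ _).trans (card_range _).le

def shiftedPart (l : List ℕ) (i : ℕ) : ℕ := l.getD i 0 + (l.length - 1 - i)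

lemma lt_length_of_lt_getD {l : List ℕ} {i j : ℕ} (hj : j < l.getD i 0) : i < l.length := by
  by_contra! h
  simp only [List.getD_eq_default _ _ h, Nat.not_lt_zero] at hj

section Partition

variable {l : List ℕ} (hl : l.Pairwise (· ≥ ·))
include hl

lemma getD_antitone : Antitone (l.getD · 0) := by
  intro r s hrs
  rcases lt_or_ge s l.length with hs | hs
  · rcases hrs.lt_or_eq with hrs | rfl
    · simp only [List.getD_eq_getElem _ _ hs, List.getD_eq_getElem _ _ (hrs.trans hs)]
      exact List.pairwise_iff_getElem.1 hl _ _ _ _ hrs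
    · rfl
  · simp only [List.getD_eq_default _ _ hs, zero_le]

lemma lt_conjCount_iff {i j : ℕ} : i < conjCount l j ↔ j < l.getD i 0 := by
  rw [conjCount_eq_card]
  constructor
  · intro hi
    by_contra! hj
    have : {r ∈ range l.length | j < l.getD r 0} ⊆ range i := by
      intro r hr
      simp only [mem_filter, mem_range] at hr ⊢
      by_contra! hir
      exact absurd (hj.trans_lt hr.2) (getD_antitone hl hir).not_gt
    exact absurd ((card_le_card this).trans (card_range i).le) hi.not_ge
  · intro hj
    have : range (i + 1) ⊆ {r ∈ range l.length | j < l.getD r 0} := by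
      intro r hr
      have hri : r ≤ i := Nat.lt_succ_iff.1 (mem_range.1 hr)
      have hjr := hj.trans_le (getD_antitone hl hri)
      exact mem_filter.2 ⟨mem_range.2 (lt_length_of_lt_getD hjr), hjr⟩
    simpa using card_le_card this

lemma conjCount_antitone : Antitone (conjCount l) := by
  intro j j' hjj'
  by_contra! h
  have := (lt_conjCount_iff hl).1 h
  exact absurd ((lt_conjCount_iff hl).2 (hjj'.trans_lt this)) (lt_irrefl _)

lemma shiftedPart_lt_of_lt {i k : ℕ} (hik : i < k) (hk : k < l.length) :
    shiftedPart l k < shiftedPart l i := by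
  have : l.getD k 0 ≤ l.getD i 0 := getD_antitone hl hik.le
  unfold shiftedPart
  omega

lemma hookLen_mem_Ico {i j : ℕ} (hj : j < l.getD i 0) :
    hookLen l i j ∈ Ico 1 (shiftedPart l i + 1) := by
  have h1 := (lt_conjCount_iff hl).2 hj
  have h2 := conjCount_le_length l j
  rw [mem_Ico, hookLen, shiftedPart]
  omega

lemma hookLen_lt_of_lt {i j j' : ℕ} (hjj' : j < j') (hj' : j' < l.getD i 0) :
    hookLen l i j' < hookLen l i j := by
  have h1 := conjCount_antitone hl hjj'.le
  have h2 := (lt_conjCount_iff hl).2 hj'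
  unfold hookLen
  omega

lemma hookLen_ne_shiftedPart_sub {i j k : ℕ} (hj : j < l.getD i 0) (hik : i < k)
    (hk : k < l.length) : hookLen l i j ≠ shiftedPart l i - shiftedPart l k := by
  have hi := (lt_conjCount_iff hl).2 hj
  have hL := conjCount_le_length l j
  intro heq
  have hkey : conjCount l j + l.getD k 0 = j + k + 1 := by
    unfold hookLen shiftedPart at heq
    omega
  rcases lt_or_ge j (l.getD k 0) with hjk | hjk
  · have := (lt_conjCount_iff hl).2 hjk
    omega
  · have := mt (lt_conjCount_iff hl (i := k)).1 hjk.not_gt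
    omega

lemma prod_hookLen_mul_prod_shiftedPart_sub {i : ℕ} (hi : i < l.length) :
    (∏ j ∈ range (l.getD i 0), hookLen l i j) *
        ∏ k ∈ Ioo i l.length, (shiftedPart l i - shiftedPart l k) = (shiftedPart l i)! := by
  set hooks := (range (l.getD i 0)).image (hookLen l i)
  set gaps := (Ioo i l.length).image fun k => shiftedPart l i - shiftedPart l k
  have hinj_hooks : Set.InjOn (hookLen l i) (range (l.getD i 0)) :=
    StrictAntiOn.injOn fun j _ j' hj' hjj' => hookLen_lt_of_lt hl hjj' (mem_range.1 hj')
  have hinj_gaps : Set.InjOn (fun k => shiftedPart l i - shiftedPart l k) (Ioo i l.length) := by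
    refine StrictMonoOn.injOn fun k hk k' hk' hkk' => ?_
    have := shiftedPart_lt_of_lt hl hkk' (mem_Ioo.1 hk').2
    have := shiftedPart_lt_of_lt hl (mem_Ioo.1 hk).1 (mem_Ioo.1 hk).2
    omega
  have hdisj : Disjoint hooks gaps := by
    simp only [hooks, gaps, disjoint_left, mem_image, mem_range, mem_Ioo]
    rintro _ ⟨j, hj, rfl⟩ ⟨k, ⟨hik, hk⟩, heq⟩
    exact hookLen_ne_shiftedPart_sub hl hj hik hk heq.symm
  have hunion : hooks ∪ gaps = Ico 1 (shiftedPart l i + 1) := by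
    refine eq_of_subset_of_card_le (union_subset ?_ ?_) ?_
    · simp only [hooks, image_subset_iff, mem_range]
      exact fun j hj => hookLen_mem_Ico hl hj
    · simp only [gaps, image_subset_iff, mem_Ioo, mem_Ico]
      intro k hk
      have := shiftedPart_lt_of_lt hl hk.1 hk.2
      omega
    · rw [card_union_of_disjoint hdisj, card_image_of_injOn hinj_hooks,
        card_image_of_injOn hinj_gaps, card_range, Nat.card_Ioo, Nat.card_Ico, shiftedPart]
      omega
  calc _ = (∏ x ∈ hooks, x) * ∏ x ∈ gaps, x := by
        rw [prod_image hinj_hooks, prod_image hinj_gaps]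
    _ = _ := by rw [← prod_union hdisj, hunion, prod_Ico_id_eq_factorial]

lemma hookProdC_mul_prod_shiftedPart_sub :
    hookProdC l * ∏ i : Fin l.length, ∏ j ∈ Ioi i,
        ((shiftedPart l i : ℂ) - shiftedPart l j) =
      ∏ i : Fin l.length, ((shiftedPart l i)! : ℂ) := by
  have hgaps (i : Fin l.length) : ∏ j ∈ Ioi i, ((shiftedPart l i : ℂ) - shiftedPart l j) =
      ∏ k ∈ Ioo (i : ℕ) l.length, ((shiftedPart l i - shiftedPart l k : ℕ) : ℂ) := by
    rw [← Fin.map_valEmbedding_Ioi, prod_map]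
    refine prod_congr rfl fun j hj => ?_
    rw [Fin.valEmbedding_apply,
      Nat.cast_sub (shiftedPart_lt_of_lt hl (Fin.lt_def.1 (mem_Ioi.1 hj)) j.isLt).le]
  simp only [hgaps, hookProdC, Fin.prod_univ_eq_prod_range (fun i => ((shiftedPart l i)! : ℂ)),
    Fin.prod_univ_eq_prod_range
      (fun i => ∏ k ∈ Ioo i l.length, ((shiftedPart l i - shiftedPart l k : ℕ) : ℂ))]
  rw [← prod_mul_distrib]
  refine prod_congr rfl fun i hi => ?_
  rw [← prod_hookLen_mul_prod_shiftedPart_sub hl (mem_range.1 hi)]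
  push_cast
  rfl

end Partition

lemma schurP_div_natCast_eq_det (a : ℂ) (l : List ℕ) :
    schurP (fun m => a / (m : ℂ)) l =
      (of fun i j : Fin l.length => contentH (a + 1 - l.length + (j.rev : ℕ))
        ((shiftedPart l i : ℤ) - (j.rev : ℕ))).det := by
  refine (det_contentH_eq_det_contentH_sub a fun i => (l.get i : ℤ) - (i : ℕ)).trans
    (congrArg det (ext fun i j => ?_))
  have hj : (j.rev : ℕ) + j + 1 = l.length := by rw [Fin.val_rev]; omega
  have hi : l.getD i 0 = l.get i := List.getD_eq_getElem _ _ i.isLt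
  simp only [of_apply, shiftedPart, hi]
  congr 1
  · have : ((j.rev : ℕ) : ℂ) + j + 1 = l.length := by exact_mod_cast hj
    linear_combination (-1 : ℂ) * this
  · omega

lemma pochC_shiftedPart (a : ℂ) (l : List ℕ) {i : ℕ} (hi : i < l.length) :
    pochC (a + 1 - l.length) (shiftedPart l i) =
      pochC (a + 1 - l.length) (l.length - 1 - i) * ∏ j ∈ range (l.getD i 0), (a + j - i) := by
  rw [shiftedPart, Nat.add_comm (l.getD i 0), pochC_add]
  congr 1
  refine prod_congr rfl fun j _ => ?_
  push_cast [Nat.cast_sub (show i ≤ l.length - 1 by omega),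
    Nat.cast_sub (show 1 ≤ l.length by omega)]
  ring

lemma prod_pochC_shiftedPart (a : ℂ) (l : List ℕ) :
    ∏ i : Fin l.length, pochC (a + 1 - l.length) (shiftedPart l i) =
      (∏ j : Fin l.length, pochC (a + 1 - l.length) j.rev) *
        ∏ i ∈ range l.length, ∏ j ∈ range (l.getD i 0), (a + j - i) := by
  rw [← Fin.prod_univ_eq_prod_range (fun i => ∏ j ∈ range (l.getD i 0), (a + j - i)),
    ← prod_mul_distrib]
  refine prod_congr rfl fun i _ => ?_
  rw [pochC_shiftedPart a l i.isLt, Fin.val_rev, Nat.sub_sub, Nat.add_comm 1]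

lemma pochC_ne_zero_of_notMem_range {a : ℂ} (ha : a ∉ Set.range ((↑) : ℕ → ℂ))
    {L k : ℕ} (hk : k < L) : pochC (a + 1 - L) k ≠ 0 := by
  refine prod_ne_zero_iff.2 fun s hs h => ha ⟨L - 1 - s, ?_⟩
  have := mem_range.1 hs
  push_cast [Nat.cast_sub (show s ≤ L - 1 by omega), Nat.cast_sub (show 1 ≤ L by omega)]
  linear_combination -h

theorem schurP_div_natCast_of_notMem_range {a : ℂ} {l : List ℕ} (hl : l.Pairwise (· ≥ ·))
    (ha : a ∉ Set.range ((↑) : ℕ → ℂ)) :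
    schurP (fun m => a / (m : ℂ)) l =
      (∏ i ∈ range l.length, ∏ j ∈ range (l.getD i 0), (a + j - i)) / hookProdC l := by
  set b := a + 1 - l.length
  set m : Fin l.length → ℕ := fun i => shiftedPart l i
  set E := ∏ j : Fin l.length, pochC b j.rev
  set Δ := ∏ i : Fin l.length, ∏ j ∈ Ioi i, ((m i : ℂ) - m j)
  have hE : E ≠ 0 := prod_ne_zero_iff.2 fun j _ => pochC_ne_zero_of_notMem_range ha j.rev.isLt
  have hfact : ∏ i, ((m i)! : ℂ) ≠ 0 :=
    prod_ne_zero_iff.2 fun i _ => Nat.cast_ne_zero.2 (Nat.factorial_ne_zero _)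
  have hhook : hookProdC l * Δ = ∏ i, ((m i)! : ℂ) := hookProdC_mul_prod_shiftedPart_sub hl
  have hH : hookProdC l ≠ 0 := left_ne_zero_of_mul (hhook ▸ hfact)
  have hΔ : Δ ≠ 0 := right_ne_zero_of_mul (hhook ▸ hfact)
  rw [eq_div_iff hH]
  refine mul_left_cancel₀ (mul_ne_zero hE hΔ) ?_
  calc E * Δ * (schurP (fun m => a / (m : ℂ)) l * hookProdC l)
      = (E * schurP (fun m => a / (m : ℂ)) l) * (hookProdC l * Δ) := by ring
    _ = (∏ i, pochC b (m i) / (m i)!) * Δ * ∏ i, ((m i)! : ℂ) := by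
      rw [schurP_div_natCast_eq_det, prod_pochC_mul_det_contentH, hhook]
    _ = (∏ i, pochC b (m i)) * Δ := by
      rw [prod_div_distrib]
      field_simp
    _ = _ := by rw [prod_pochC_shiftedPart]; ring

lemma continuous_schurP_div_natCast (l : List ℕ) :
    Continuous fun a : ℂ => schurP (fun m => a / (m : ℂ)) l := by
  refine Continuous.matrix_det (continuous_pi fun i => continuous_pi fun j => ?_)
  simp only [of_apply, pInt]
  split_ifs
  · simp only [elemSchur_div_natCast, pochC]
    fun_prop
  · exact continuous_const

theorem stmt8_general (a : ℂ) (l : List ℕ) (hl : l.Pairwise (· ≥ ·)) :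
    schurP (fun m => a / (m : ℂ)) l =
      (∏ i ∈ Finset.range l.length, ∏ j ∈ Finset.range (l.getD i 0),
        (a + (j : ℂ) - (i : ℂ))) / hookProdC l := by
  have hcont : Continuous fun a : ℂ =>
      (∏ i ∈ range l.length, ∏ j ∈ range (l.getD i 0), (a + (j : ℂ) - (i : ℂ))) /
        hookProdC l := by
    fun_prop
  refine congrFun (Continuous.ext_on ((Set.countable_range ((↑) : ℕ → ℂ)).dense_compl ℂ)
    (continuous_schurP_div_natCast l) hcont fun a ha => ?_) a
  exact schurP_div_natCast_of_notMem_range hl ha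

theorem stmt8 (a : ℂ) (N : ℕ) (l : List ℕ) (hl : l.Pairwise (· ≥ ·)) (hlen : l.length ≤ N) :
    schurP (fun m => a / (m : ℂ)) l =
      (∏ i ∈ Finset.range l.length, ∏ j ∈ Finset.range (l.getD i 0),
        (a + (j : ℂ) - (i : ℂ))) / hookProdC l :=
  stmt8_general a l hl
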